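/- The map α ↦ z_α is strictly decreasing and the map β ↦ z_β is strictly increasing: if 0 ≤ α₁ < α₂ < 1/δ and z_{α₁}, z_{α₂} ∈ (0,1) satisfy φ_{α₁}(z_{α₁}) = 0 and φ_{α₂}(z_{α₂}) = 0, then z_{α₂} < z_{α₁}; and if 0 ≤ β₁ < β₂ and z_{β₁}, z_{β₂} ∈ [1,∞) satisfy φ_{β₁}(z_{β₁}) = 0 and φ_{β₂}(z_{β₂}) = 0, then z_{β₁} < z_{β₂}. -/

import Mathlib

/-- The function `φ_α(z) = (2/(κ² m₁(m₁−1))) z^{m₁} + (z/r)(m₂−1) + m₂(α − 1/δ)`. -/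
noncomputable def phiA (r δ κ m₁ m₂ α : ℝ) (z : ℝ) : ℝ :=
  2 / (κ ^ 2 * m₁ * (m₁ - 1)) * z ^ m₁ + z / r * (m₂ - 1) + m₂ * (α - 1 / δ)

/-- The function `φ_β(z) = (2/(κ² m₂(m₂−1))) z^{m₂} + (z/r)(m₁−1) − m₁(β + 1/δ)`. -/
noncomputable def phiB (r δ κ m₁ m₂ β : ℝ) (z : ℝ) : ℝ :=
  2 / (κ ^ 2 * m₂ * (m₂ - 1)) * z ^ m₂ + z / r * (m₁ - 1) - m₁ * (β + 1 / δ)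

set_option maxHeartbeats 1000000 in
/-- The map `α ↦ z_α` is strictly decreasing and the map `β ↦ z_β` is
strictly increasing. -/
theorem boundary_constants_monotone (r δ κ γ m₁ m₂ : ℝ)
    (hr : 0 < r) (hδ : 0 < δ) (hκ : 0 < κ) (hγ : 0 < γ) (hγ1 : γ ≠ 1)
    (hK : 0 < r + (δ - r) / γ + ((γ - 1) / (2 * γ ^ 2)) * κ ^ 2)
    (hQ1 : κ ^ 2 / 2 * m₁ ^ 2 + (δ - r - κ ^ 2 / 2) * m₁ - δ = 0)
    (hQ2 : κ ^ 2 / 2 * m₂ ^ 2 + (δ - r - κ ^ 2 / 2) * m₂ - δ = 0)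
    (hm1 : 1 < m₁) (hm2 : m₂ < min ((γ - 1) / γ) 0) :
    (∀ α₁ α₂ z₁ z₂ : ℝ, 0 ≤ α₁ → α₁ < α₂ → α₂ < 1 / δ →
      z₁ ∈ Set.Ioo (0 : ℝ) 1 → z₂ ∈ Set.Ioo (0 : ℝ) 1 →
      phiA r δ κ m₁ m₂ α₁ z₁ = 0 → phiA r δ κ m₁ m₂ α₂ z₂ = 0 → z₂ < z₁) ∧
    (∀ β₁ β₂ z₁ z₂ : ℝ, 0 ≤ β₁ → β₁ < β₂ →
      z₁ ∈ Set.Ici (1 : ℝ) → z₂ ∈ Set.Ici (1 : ℝ) →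
      phiB r δ κ m₁ m₂ β₁ z₁ = 0 → phiB r δ κ m₁ m₂ β₂ z₂ = 0 → z₁ < z₂) := by
  have hm2n : m₂ < 0 := lt_of_lt_of_le hm2 (min_le_right _ _)
  have hκ2 : (0:ℝ) < κ ^ 2 := by positivity
  -- Vieta-type identity: κ²(m₁-1)(m₂-1) = -2r
  have hd : (m₁ - m₂) * (κ ^ 2 * (m₁ + m₂) + 2 * (δ - r) - κ ^ 2) = 0 := by
    linear_combination 2 * hQ1 - 2 * hQ2
  have hS : κ ^ 2 * (m₁ + m₂) + 2 * (δ - r) - κ ^ 2 = 0 := by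
    rcases mul_eq_zero.mp hd with h | h
    · exfalso; nlinarith
    · exact h
  have hK2 : κ ^ 2 * (m₁ - 1) * (m₂ - 1) = -(2 * r) := by
    linear_combination (m₁ - 1) * hS - 2 * hQ1
  have hm1' : (0:ℝ) < m₁ - 1 := by linarith
  -- derivative facts
  constructor
  · intro α₁ α₂ z₁ z₂ hα₁ hα hα2 hz₁ hz₂ hp1 hp2
    set f : ℝ → ℝ := phiA r δ κ m₁ m₂ α₁ with hf
    have hanti : StrictAntiOn f (Set.Ioo (0:ℝ) 1) := by
      apply strictAntiOn_of_deriv_neg (convex_Ioo 0 1)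
      · apply ContinuousOn.add
        apply ContinuousOn.add
        · exact ContinuousOn.mul continuousOn_const (fun x hx =>
            (Real.continuousAt_rpow_const x m₁ (Or.inr (by linarith))).continuousWithinAt)
        · exact (continuousOn_id.div_const r).mul continuousOn_const
        · exact continuousOn_const
      · intro x hx
        rw [interior_Ioo] at hx
        obtain ⟨hx0, hx1⟩ := hx
        have hder : HasDerivAt f
            (2 / (κ ^ 2 * m₁ * (m₁ - 1)) * (m₁ * x ^ (m₁ - 1)) + 1 / r * (m₂ - 1)) x := by
          have h1 : HasDerivAt (fun z : ℝ => z ^ m₁) (m₁ * x ^ (m₁ - 1)) x :=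
            Real.hasDerivAt_rpow_const (Or.inl hx0.ne')
          exact (((h1.const_mul _).add (((hasDerivAt_id x).div_const r).mul_const _)).add_const _)
        rw [hder.deriv]
        have hx' : x ^ (m₁ - 1) < 1 := Real.rpow_lt_one hx0.le hx1 (by linarith)
        have hxpos : (0:ℝ) < x ^ (m₁ - 1) := Real.rpow_pos_of_pos hx0 _
        have hcpos : (0:ℝ) < 2 / (κ ^ 2 * (m₁ - 1)) := by positivity
        have heq : 2 / (κ ^ 2 * m₁ * (m₁ - 1)) * m₁ = 2 / (κ ^ 2 * (m₁ - 1)) := by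
          field_simp
        have heq2 : 1 / r * (m₂ - 1) = -(2 / (κ ^ 2 * (m₁ - 1))) := by
          have h1 : κ ^ 2 * (m₁ - 1) ≠ 0 := by positivity
          field_simp
          linear_combination hK2
        calc 2 / (κ ^ 2 * m₁ * (m₁ - 1)) * (m₁ * x ^ (m₁ - 1)) + 1 / r * (m₂ - 1)
            = 2 / (κ ^ 2 * (m₁ - 1)) * x ^ (m₁ - 1) - 2 / (κ ^ 2 * (m₁ - 1)) := by
              rw [heq2]; rw [← mul_assoc, heq]; ring
          _ < 0 := by nlinarith
    have hval : f z₁ < f z₂ := by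
      have : f z₂ = m₂ * (α₁ - α₂) := by
        have : phiA r δ κ m₁ m₂ α₁ z₂ = phiA r δ κ m₁ m₂ α₂ z₂ + m₂ * (α₁ - α₂) := by
          unfold phiA; ring
        rw [hf, this, hp2, zero_add]
      rw [hp1, this]
      nlinarith
    exact (hanti.lt_iff_gt hz₁ hz₂).mp hval
  · intro β₁ β₂ z₁ z₂ hβ₁ hβ hz₁ hz₂ hp1 hp2
    set g : ℝ → ℝ := phiB r δ κ m₁ m₂ β₁ with hg
    have hm2' : m₂ * (m₂ - 1) > 0 := by nlinarith
    have hmono : StrictMonoOn g (Set.Ici (1:ℝ)) := by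
      apply strictMonoOn_of_deriv_pos (convex_Ici 1)
      · apply ContinuousOn.sub
        apply ContinuousOn.add
        · exact ContinuousOn.mul continuousOn_const (fun x hx =>
            (Real.continuousAt_rpow_const x m₂
              (Or.inl (by exact ne_of_gt (lt_of_lt_of_le one_pos hx)))).continuousWithinAt)
        · exact (continuousOn_id.div_const r).mul continuousOn_const
        · exact continuousOn_const
      · intro x hx
        rw [interior_Ici] at hx
        have hx1 : (1:ℝ) < x := hx
        have hx0 : (0:ℝ) < x := by linarith
        have hder : HasDerivAt g
            (2 / (κ ^ 2 * m₂ * (m₂ - 1)) * (m₂ * x ^ (m₂ - 1)) + 1 / r * (m₁ - 1)) x := by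
          have h1 : HasDerivAt (fun z : ℝ => z ^ m₂) (m₂ * x ^ (m₂ - 1)) x :=
            Real.hasDerivAt_rpow_const (Or.inl hx0.ne')
          exact (((h1.const_mul _).add (((hasDerivAt_id x).div_const r).mul_const _)).sub_const _)
        rw [hder.deriv]
        have hx' : x ^ (m₂ - 1) < 1 := Real.rpow_lt_one_of_one_lt_of_neg hx1 (by linarith)
        have hxpos : (0:ℝ) < x ^ (m₂ - 1) := Real.rpow_pos_of_pos hx0 _
        have hdneg : 2 / (κ ^ 2 * (m₂ - 1)) < 0 := by
          apply div_neg_of_pos_of_neg two_pos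
          nlinarith
        have hm2ne : m₂ ≠ 0 := ne_of_lt hm2n
        have hm21ne : m₂ - 1 ≠ 0 := by intro h; nlinarith
        have heq : 2 / (κ ^ 2 * m₂ * (m₂ - 1)) * m₂ = 2 / (κ ^ 2 * (m₂ - 1)) := by
          field_simp
        have heq2 : 1 / r * (m₁ - 1) = -(2 / (κ ^ 2 * (m₂ - 1))) := by
          field_simp
          linear_combination hK2
        calc (0:ℝ) < 2 / (κ ^ 2 * (m₂ - 1)) * x ^ (m₂ - 1) - 2 / (κ ^ 2 * (m₂ - 1)) := by
              nlinarith
          _ = 2 / (κ ^ 2 * m₂ * (m₂ - 1)) * (m₂ * x ^ (m₂ - 1)) + 1 / r * (m₁ - 1) := by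
              rw [heq2]; rw [← mul_assoc, heq]; ring
    have hval : g z₁ < g z₂ := by
      have : g z₂ = m₁ * (β₂ - β₁) := by
        have : phiB r δ κ m₁ m₂ β₁ z₂ = phiB r δ κ m₁ m₂ β₂ z₂ + m₁ * (β₂ - β₁) := by
          unfold phiB; ring
        rw [hg, this, hp2, zero_add]
      rw [hp1, this]
      nlinarith
    exact (hmono.lt_iff_lt hz₁ hz₂).mp hval
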